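/- arXiv:1611.04962 — 4 statements merged into one kernel-verified Lean document; each statement's English description precedes it below -/
import Mathlib

section
/- Let Ω = [0,1] and let ρ be a nonnegative self-adjoint trace-class operator on L²(Ω) with eigendecomposition ρ = Σ_p ρ_p (φ_p, ·)φ_p, φ_p orthonormal. If φ is a nonnegative bounded function on Ω, then Tr(ρ Φ) = Σ_p ρ_p ∫_Ω φ |φ_p|² dx ≤ C (Tr((H_0+I)^{1/2} ρ (H_0+I)^{1/2})) ‖φ‖_{L¹(Ω)}, where Φ is multiplication by φ, provided each φ_p lies in the form domain of H_0. Consequently the density n[ρ] satisfies ‖n[ρ]‖_{L^∞} ≤ C Tr((H_0+I)^{1/2} ρ (H_0+I)^{1/2}). -/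
open MeasureTheory intervalIntegral

/-! The estimate is the one-dimensional Sobolev embedding `H¹(ℝ/ℤ) ⊂ L^∞`. For a periodic `u`
the function `g = ‖u‖²` stays within `∫₀¹ |g'|` of each of its values, hence `g x ≤ ∫₀¹ g + ∫₀¹ |g'|`,
and `|g'| = 2 |⟪u, u'⟫| ≤ ‖u‖² + ‖u'‖²`; so `‖u‖²_∞ ≤ 2 (‖u'‖₂² + ‖u‖₂²) = 2 ⟪u, (H₀ + I) u⟫`.
Weighting by `ρ_p ≥ 0` and summing gives the density bound, and integrating that bound against
`φ ≥ 0` gives the trace bound, both with `C = 2`. -/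

/-- `⟪u, (H₀ + I) u⟫` for `H₀ = -Δ` on the circle, written through the derivative `du` of `u`;
the trace `Tr((H₀+I)^{1/2} ρ (H₀+I)^{1/2})` is `∑ ρ_p • periodicH1NormSq φ_p φ_p'`. -/
noncomputable def periodicH1NormSq {E : Type*} [NormedAddCommGroup E] (u du : ℝ → E) : ℝ :=
  (∫ x in (0:ℝ)..1, ‖du x‖ ^ 2) + ∫ x in (0:ℝ)..1, ‖u x‖ ^ 2

theorem abs_sub_le_integral_abs_deriv {g g' : ℝ → ℝ} (hg : ∀ t, HasDerivAt g (g' t) t)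
    (hg' : Continuous g') {y z : ℝ} (hy : y ∈ Set.Icc (0:ℝ) 1) (hz : z ∈ Set.Icc (0:ℝ) 1) :
    |g z - g y| ≤ ∫ t in (0:ℝ)..1, |g' t| := by
  wlog hyz : y ≤ z generalizing y z
  · rw [abs_sub_comm]; exact this hz hy (le_of_not_ge hyz)
  calc |g z - g y| = |∫ t in y..z, g' t| := by
        rw [integral_eq_sub_of_hasDerivAt (fun t _ => hg t) (hg'.intervalIntegrable _ _)]
    _ ≤ ∫ t in y..z, |g' t| := abs_integral_le_integral_abs hyz
    _ ≤ ∫ t in (0:ℝ)..1, |g' t| := integral_mono_interval hy.1 hyz hz.2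
        (Filter.Eventually.of_forall fun t => abs_nonneg _) (hg'.abs.intervalIntegrable _ _)

theorem le_integral_add_integral_abs_deriv {g g' : ℝ → ℝ} (hg : ∀ t, HasDerivAt g (g' t) t)
    (hg' : Continuous g') {z : ℝ} (hz : z ∈ Set.Icc (0:ℝ) 1) :
    g z ≤ (∫ t in (0:ℝ)..1, g t) + ∫ t in (0:ℝ)..1, |g' t| := by
  have hgc : Continuous g := continuous_iff_continuousAt.2 fun t => (hg t).continuousAt
  calc g z = ∫ _ in (0:ℝ)..1, g z := by simp
    _ ≤ ∫ y in (0:ℝ)..1, (g y + ∫ t in (0:ℝ)..1, |g' t|) :=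
        integral_mono_on zero_le_one intervalIntegrable_const
          ((hgc.add continuous_const).intervalIntegrable _ _) fun y hy =>
          sub_le_iff_le_add'.1 (abs_sub_le_iff.1 (abs_sub_le_integral_abs_deriv hg hg' hy hz)).1
    _ = (∫ t in (0:ℝ)..1, g t) + ∫ t in (0:ℝ)..1, |g' t| := by
        rw [integral_add (hgc.intervalIntegrable _ _) intervalIntegrable_const]; simp

theorem Function.Periodic.le_integral_add_integral_abs_deriv {g g' : ℝ → ℝ}
    (hper : Function.Periodic g 1) (hg : ∀ t, HasDerivAt g (g' t) t) (hg' : Continuous g')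
    (x : ℝ) : g x ≤ (∫ t in (0:ℝ)..1, g t) + ∫ t in (0:ℝ)..1, |g' t| := by
  obtain ⟨z, hz, hxz⟩ := hper.exists_mem_Ico₀ one_pos x
  rw [hxz]
  exact _root_.le_integral_add_integral_abs_deriv hg hg' (Set.Ico_subset_Icc_self hz)

theorem Function.Periodic.sq_norm_le_two_mul_periodicH1NormSq {E : Type*}
    [NormedAddCommGroup E] [InnerProductSpace ℝ E] {u du : ℝ → E}
    (hper : Function.Periodic u 1) (hu : ∀ t, HasDerivAt u (du t) t) (hdu : Continuous du)
    (x : ℝ) : ‖u x‖ ^ 2 ≤ 2 * periodicH1NormSq u du := by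
  have huc : Continuous u := continuous_iff_continuousAt.2 fun t => (hu t).continuousAt
  have hderiv_bound : ∀ t, |2 * inner ℝ (u t) (du t)| ≤ ‖u t‖ ^ 2 + ‖du t‖ ^ 2 := fun t =>
    calc |2 * inner ℝ (u t) (du t)| ≤ 2 * (‖u t‖ * ‖du t‖) := by
          rw [abs_mul, abs_two]; gcongr; exact abs_real_inner_le_norm _ _
      _ ≤ ‖u t‖ ^ 2 + ‖du t‖ ^ 2 := by rw [← mul_assoc]; exact two_mul_le_add_sq _ _
  have hsq_int : ∀ v : ℝ → E, Continuous v → IntervalIntegrable (‖v ·‖ ^ 2) volume 0 1 :=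
    fun v hv => (hv.norm.pow 2).intervalIntegrable _ _
  have hvar : (∫ t in (0:ℝ)..1, |2 * inner ℝ (u t) (du t)|) ≤
      (∫ t in (0:ℝ)..1, ‖u t‖ ^ 2) + ∫ t in (0:ℝ)..1, ‖du t‖ ^ 2 := by
    rw [← integral_add (hsq_int u huc) (hsq_int du hdu)]
    exact integral_mono_on zero_le_one
      ((continuous_const.mul (huc.inner hdu)).abs.intervalIntegrable _ _)
      ((huc.norm.pow 2).add (hdu.norm.pow 2) |>.intervalIntegrable _ _) fun t _ =>
      hderiv_bound t
  have hdu_nonneg : 0 ≤ ∫ t in (0:ℝ)..1, ‖du t‖ ^ 2 :=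
    integral_nonneg zero_le_one fun t _ => sq_nonneg _
  have hsup := Function.Periodic.le_integral_add_integral_abs_deriv (g := (‖u ·‖ ^ 2))
    (hper.comp (‖·‖ ^ 2)) (fun t => (hu t).norm_sq) (continuous_const.mul (huc.inner hdu)) x
  unfold periodicH1NormSq
  linarith

theorem tsum_le_mul_tsum_of_nonneg_of_le {ι : Type*} {a b : ι → ℝ} {c : ℝ}
    (ha : ∀ i, 0 ≤ a i) (hab : ∀ i, a i ≤ c * b i) (hb : Summable b) :
    ∑' i, a i ≤ c * ∑' i, b i := by
  rw [← tsum_mul_left]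
  exact (hb.mul_left c).of_nonneg_of_le ha hab |>.tsum_le_tsum hab (hb.mul_left c)

theorem integral_mul_le_mul_integral_of_le {f φ : ℝ → ℝ} {M a b : ℝ} (hab : a ≤ b)
    (hf : Continuous f) (hφ : Continuous φ) (hφ_nonneg : ∀ x, 0 ≤ φ x) (hfM : ∀ x, f x ≤ M) :
    ∫ x in a..b, φ x * f x ≤ M * ∫ x in a..b, φ x := by
  rw [← intervalIntegral.integral_const_mul]
  exact integral_mono_on hab ((hφ.mul hf).intervalIntegrable _ _)
    ((continuous_const.mul hφ).intervalIntegrable _ _) fun x _ => by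
      rw [mul_comm M]; exact mul_le_mul_of_nonneg_left (hfM x) (hφ_nonneg x)

/-- For a nonnegative trace-class operator ρ = Σ ρ_p (φ_p,·)φ_p on L²([0,1])
    (periodic setting, eigenfunctions represented by C¹ periodic functions),
    and a nonnegative bounded φ:
    Tr(ρΦ) = Σ_p ρ_p ∫ φ|φ_p|² ≤ C Tr((H₀+I)^{1/2} ρ (H₀+I)^{1/2}) ‖φ‖_{L¹},
    where Tr((H₀+I)^{1/2} ρ (H₀+I)^{1/2}) = Σ_p ρ_p (∫|φ_p'|² + ∫|φ_p|²);
    consequently the density n[ρ](x) = Σ_p ρ_p |φ_p(x)|² satisfies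
    ‖n[ρ]‖_{L^∞} ≤ C Tr((H₀+I)^{1/2} ρ (H₀+I)^{1/2}). -/
theorem stmt7 :
    ∃ C : ℝ, 0 < C ∧
    ∀ (ρ : ℕ → ℝ) (φp dφp : ℕ → ℝ → ℂ) (φ : ℝ → ℝ),
      (∀ p, 0 ≤ ρ p) → Summable ρ →
      (∀ p x, HasDerivAt (φp p) (dφp p x) x) →
      (∀ p, Function.Periodic (φp p) 1) →
      (∀ p, Continuous (dφp p)) →
      (∀ p q : ℕ, (∫ x in (0:ℝ)..1, (starRingEnd ℂ) (φp p x) * φp q x) =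
        if p = q then 1 else 0) →
      Continuous φ → (∀ x, 0 ≤ φ x) →
      Summable (fun p => ρ p *
        ((∫ x in (0:ℝ)..1, ‖dφp p x‖ ^ 2) + ∫ x in (0:ℝ)..1, ‖φp p x‖ ^ 2)) →
      ((∑' p, ρ p * ∫ x in (0:ℝ)..1, φ x * ‖φp p x‖ ^ 2) ≤
        C * (∑' p, ρ p *
          ((∫ x in (0:ℝ)..1, ‖dφp p x‖ ^ 2) + ∫ x in (0:ℝ)..1, ‖φp p x‖ ^ 2)) *
          ∫ x in (0:ℝ)..1, φ x) ∧
      ∀ x : ℝ, (∑' p, ρ p * ‖φp p x‖ ^ 2) ≤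
        C * (∑' p, ρ p *
          ((∫ x in (0:ℝ)..1, ‖dφp p x‖ ^ 2) + ∫ x in (0:ℝ)..1, ‖φp p x‖ ^ 2)) := by
  refine ⟨2, two_pos, fun ρ φp dφp φ hρ _ hu hper hdu _ hφ hφ_nonneg hsum => ?_⟩
  have hsup : ∀ p x, ‖φp p x‖ ^ 2 ≤ 2 * periodicH1NormSq (φp p) (dφp p) := fun p =>
    (hper p).sq_norm_le_two_mul_periodicH1NormSq (hu p) (hdu p)
  have huc : ∀ p, Continuous (φp p) := fun p =>
    continuous_iff_continuousAt.2 fun t => (hu p t).continuousAt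
  refine ⟨?_, fun x => ?_⟩
  · calc (∑' p, ρ p * ∫ x in (0:ℝ)..1, φ x * ‖φp p x‖ ^ 2)
        ≤ (2 * ∫ x in (0:ℝ)..1, φ x) * ∑' p, ρ p * periodicH1NormSq (φp p) (dφp p) := by
          refine tsum_le_mul_tsum_of_nonneg_of_le (fun p => mul_nonneg (hρ p) ?_) (fun p => ?_) hsum
          · exact integral_nonneg zero_le_one fun t _ => mul_nonneg (hφ_nonneg t) (sq_nonneg _)
          · calc _ ≤ ρ p * (2 * periodicH1NormSq (φp p) (dφp p) * ∫ x in (0:ℝ)..1, φ x) :=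
                  mul_le_mul_of_nonneg_left (integral_mul_le_mul_integral_of_le zero_le_one
                    (f := (‖φp p ·‖ ^ 2)) ((huc p).norm.pow 2) hφ hφ_nonneg (hsup p)) (hρ p)
              _ = _ := by ring
      _ = _ := by unfold periodicH1NormSq; ring
  · refine tsum_le_mul_tsum_of_nonneg_of_le (fun p => mul_nonneg (hρ p) (sq_nonneg _))
      (fun p => ?_) hsum
    rw [mul_left_comm]
    exact mul_le_mul_of_nonneg_left (hsup p x) (hρ p)
end

section
/- Let ρ and ρ_∞ be nonnegative trace-class operators on L²([0,1]) with densities n = n[ρ] and n_∞ = n[ρ_∞], and let R = 1 + |H + A_∞| where H + A_∞ is a periodic Schrödinger operator whose eigenvalues λ_p satisfy λ_p ≥ 1 + Cp² + C' > 0 for large p. Then ‖n − n_∞‖_{L¹(Ω)} ≤ C ‖(ρ − ρ_∞) R^{1/2}‖_{J₂}, where J₂ is the Hilbert–Schmidt class and C depends only on Σ_p λ_p^{−1}. -/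
/-!
Testing `n - n_∞` against its sign `φ` turns the `L¹` norm into the trace of `T M_φ`,
`T = ρ - ρ_∞`. Cyclicity of the trace (the double series `⟨u_q, M_φ u_p⟩⟨u_p, T u_q⟩` converges
absolutely by Bessel) rewrites it as `Σ_p ⟨M_φ* u_p, T u_p⟩`, which is at most
`‖M_φ‖ Σ_p ‖T u_p‖ ≤ Σ_p λ_p^{-1/2} · λ_p^{1/2} ‖T u_p‖`; Cauchy–Schwarz finishes.
-/

open MeasureTheory

section CauchySchwarz

variable {ι : Type*} {f g : ι → ℝ}

theorem summable_mul_and_tsum_mul_le_sqrt_mul_sqrt (hf : ∀ i, 0 ≤ f i) (hg : ∀ i, 0 ≤ g i)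
    (hf2 : Summable fun i => f i ^ 2) (hg2 : Summable fun i => g i ^ 2) :
    (Summable fun i => f i * g i) ∧
      ∑' i, f i * g i ≤ √(∑' i, f i ^ 2) * √(∑' i, g i ^ 2) := by
  simpa only [Real.rpow_two, Real.sqrt_eq_rpow] using
    Real.summable_and_inner_le_Lp_mul_Lq_tsum_of_nonneg Real.HolderConjugate.two_two hf hg
      (by simpa only [Real.rpow_two] using hf2) (by simpa only [Real.rpow_two] using hg2)

theorem summable_and_tsum_le_sqrt_tsum_inv_mul_sqrt_tsum_mul_sq {w : ι → ℝ} (hw : ∀ i, 0 < w i)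
    (hf : ∀ i, 0 ≤ f i) (hw_inv : Summable fun i => (w i)⁻¹)
    (hwf : Summable fun i => w i * f i ^ 2) :
    Summable f ∧ ∑' i, f i ≤ √(∑' i, (w i)⁻¹) * √(∑' i, w i * f i ^ 2) := by
  have hsplit : ∀ i, f i = √(w i)⁻¹ * √(w i * f i ^ 2) := fun i => by
    rw [← Real.sqrt_mul (inv_nonneg.2 (hw i).le), inv_mul_cancel_left₀ (hw i).ne',
      Real.sqrt_sq (hf i)]
  have hw_inv' : ∀ i, √(w i)⁻¹ ^ 2 = (w i)⁻¹ := fun i => Real.sq_sqrt (inv_nonneg.2 (hw i).le)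
  have hwf' : ∀ i, √(w i * f i ^ 2) ^ 2 = w i * f i ^ 2 := fun i =>
    Real.sq_sqrt (mul_nonneg (hw i).le (sq_nonneg _))
  have key := summable_mul_and_tsum_mul_le_sqrt_mul_sqrt (fun _ => Real.sqrt_nonneg _)
    (fun _ => Real.sqrt_nonneg _) (hw_inv.congr fun i => (hw_inv' i).symm)
    (hwf.congr fun i => (hwf' i).symm)
  simpa only [← hsplit, hw_inv', hwf'] using key

end CauchySchwarz

section InnerProductSpace

variable {ι 𝕜 E : Type*} [RCLike 𝕜] [NormedAddCommGroup E] [InnerProductSpace 𝕜 E]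

local notation "⟪" x ", " y "⟫" => inner 𝕜 x y

theorem Orthonormal.summable_and_tsum_norm_inner_mul_norm_inner_le {v : ι → E}
    (hv : Orthonormal 𝕜 v) (x y : E) :
    (Summable fun i => ‖⟪v i, x⟫‖ * ‖⟪v i, y⟫‖) ∧ ∑' i, ‖⟪v i, x⟫‖ * ‖⟪v i, y⟫‖ ≤ ‖x‖ * ‖y‖ := by
  obtain ⟨hsum, hle⟩ := summable_mul_and_tsum_mul_le_sqrt_mul_sqrt (fun _ => norm_nonneg _)
    (fun _ => norm_nonneg _) (hv.inner_products_summable (x := x))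
    (hv.inner_products_summable (x := y))
  have hbessel : ∀ z : E, √(∑' i, ‖⟪v i, z⟫‖ ^ 2) ≤ ‖z‖ := fun z =>
    Real.sqrt_le_sqrt (hv.tsum_inner_products_le z) |>.trans_eq (Real.sqrt_sq (norm_nonneg _))
  exact ⟨hsum, hle.trans (mul_le_mul (hbessel x) (hbessel y) (Real.sqrt_nonneg _) (norm_nonneg _))⟩

variable [CompleteSpace E]

open ContinuousLinearMap

theorem HilbertBasis.tsum_inner_apply_comp_eq (b : HilbertBasis ι 𝕜 E) (A T : E →L[𝕜] E)
    (hsum : Summable fun i => ‖adjoint A (b i)‖ * ‖T (b i)‖) :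
    ∑' i, ⟪b i, T (A (b i))⟫ = ∑' i, ⟪adjoint A (b i), T (b i)⟫ := by
  set F : ι → ι → 𝕜 := fun j i => ⟪adjoint A (b j), b i⟫ * ⟪b i, T (b j)⟫ with hF
  have hrow : ∀ j, (Summable fun i => ‖F j i‖) ∧ ∑' i, ‖F j i‖ ≤ ‖adjoint A (b j)‖ * ‖T (b j)‖ :=
    fun j => by
      simpa only [hF, norm_mul, norm_inner_symm (adjoint A (b j))] using
        b.orthonormal.summable_and_tsum_norm_inner_mul_norm_inner_le (adjoint A (b j)) (T (b j))
  have hFsum : Summable (Function.uncurry F) := by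
    refine Summable.of_norm ((summable_prod_of_nonneg fun _ => norm_nonneg _).2 ⟨?_, ?_⟩)
    · exact fun j => (hrow j).1
    · exact hsum.of_nonneg_of_le (fun j => tsum_nonneg fun _ => norm_nonneg _) fun j => (hrow j).2
  have hdiag : ∀ i, HasSum (fun j => F j i) ⟪b i, T (A (b i))⟫ := fun i => by
    have := (b.hasSum_repr (A (b i))).mapL ((innerSL 𝕜 (b i)).comp T)
    simpa only [hF, comp_apply, map_smul, innerSL_apply_apply, inner_smul_right,
      b.repr_apply_apply, adjoint_inner_left, smul_eq_mul] using this
  calc ∑' i, ⟪b i, T (A (b i))⟫ = ∑' i, ∑' j, F j i := tsum_congr fun i => (hdiag i).tsum_eq.symm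
    _ = ∑' j, ∑' i, F j i := hFsum.tsum_comm
    _ = ∑' j, ⟪adjoint A (b j), T (b j)⟫ := tsum_congr fun j => b.tsum_inner_mul_inner _ _

theorem HilbertBasis.norm_tsum_inner_apply_comp_le (b : HilbertBasis ι 𝕜 E) (A T : E →L[𝕜] E)
    (hT : Summable fun i => ‖T (b i)‖) :
    ‖∑' i, ⟪b i, T (A (b i))⟫‖ ≤ ‖A‖ * ∑' i, ‖T (b i)‖ := by
  have hbound : ∀ i, ‖adjoint A (b i)‖ * ‖T (b i)‖ ≤ ‖A‖ * ‖T (b i)‖ := fun i => by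
    gcongr
    simpa only [LinearIsometryEquiv.norm_map, b.orthonormal.1 i, mul_one] using
      (adjoint A).le_opNorm (b i)
  have hsum := (hT.mul_left ‖A‖).of_nonneg_of_le (fun _ => by positivity) hbound
  rw [b.tsum_inner_apply_comp_eq A T hsum, ← tsum_mul_left]
  exact tsum_of_norm_bounded (hT.mul_left ‖A‖).hasSum fun i =>
    (norm_inner_le_norm _ _).trans (hbound i)

end InnerProductSpace

theorem exists_measurable_norm_le_one_integral_mul_eq_integral_abs {α : Type*}
    [MeasurableSpace α] {μ : Measure α} {f : α → ℝ} (hf : AEMeasurable f μ) :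
    ∃ φ : α → ℂ, Measurable φ ∧ (∀ x, ‖φ x‖ ≤ 1) ∧
      ∫ x, (f x : ℂ) * φ x ∂μ = ((∫ x, |f x| ∂μ : ℝ) : ℂ) := by
  refine ⟨fun x => if 0 ≤ hf.mk f x then 1 else -1,
    Measurable.ite (measurableSet_le measurable_const hf.measurable_mk) measurable_const
      measurable_const, fun x => by dsimp only; split_ifs <;> simp, ?_⟩
  rw [← integral_complex_ofReal]
  refine integral_congr_ae ?_
  filter_upwards [hf.ae_eq_mk] with x hx
  rw [← hx]
  split_ifs with h
  · simp [abs_of_nonneg h]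
  · simp [abs_of_neg (not_le.1 h)]

theorem MeasureTheory.Lp.opNorm_le_one_of_ae_eq_mul {α 𝕜 : Type*} [MeasurableSpace α]
    {μ : Measure α} {p : ENNReal} [Fact (1 ≤ p)] [NontriviallyNormedField 𝕜]
    (M : Lp 𝕜 p μ →L[𝕜] Lp 𝕜 p μ) {φ : α → 𝕜} (hφ : ∀ x, ‖φ x‖ ≤ 1)
    (hM : ∀ f : Lp 𝕜 p μ, (M f : α → 𝕜) =ᵐ[μ] fun x => φ x * f x) :
    ‖M‖ ≤ 1 :=
  M.opNorm_le_bound zero_le_one fun f => by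
    rw [one_mul]
    refine Lp.norm_le_norm_of_ae_le ?_
    filter_upwards [hM f] with x hx
    rw [hx, norm_mul]
    exact mul_le_of_le_one_left (norm_nonneg _) (hφ x)

theorem stmt11_general
    (μ : Measure ℝ)
    (ρ ρinf : Lp ℂ 2 μ →L[ℂ] Lp ℂ 2 μ)
    (n ninf : ℝ → ℝ)
    (hn : Integrable (fun x => n x - ninf x) μ)
    (u : ℕ → Lp ℂ 2 μ) (lam : ℕ → ℝ)
    (hu : Orthonormal ℂ u)
    (hucomplete : (Submodule.span ℂ (Set.range u)).topologicalClosure = ⊤)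
    (hlam : ∀ p, 1 ≤ lam p)
    (hlamsum : Summable (fun p => (lam p)⁻¹))
    (hHS : Summable (fun p => lam p * ‖(ρ - ρinf) (u p)‖ ^ 2))
    -- duality characterization of the densities: for every bounded measurable
    -- multiplier φ there is a multiplication operator M_φ with
    -- ∫ (n−n_∞)φ = Tr((ρ−ρ_∞) M_φ) (trace computed in the basis (u_p)):
    (hdual : ∀ φ : ℝ → ℂ, Measurable φ → (∀ x, ‖φ x‖ ≤ 1) →
      ∃ Mφ : Lp ℂ 2 μ →L[ℂ] Lp ℂ 2 μ,
        (∀ f : Lp ℂ 2 μ, (Mφ f : ℝ → ℂ) =ᵐ[μ] fun x => φ x * (f : ℝ → ℂ) x) ∧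
        (∫ x, ((n x - ninf x : ℝ) : ℂ) * φ x ∂μ) =
          ∑' p, (inner ℂ (u p) ((ρ - ρinf) (Mφ (u p))) : ℂ)) :
    (∫ x, |n x - ninf x| ∂μ) ≤
      Real.sqrt (∑' p, (lam p)⁻¹) *
        Real.sqrt (∑' p, lam p * ‖(ρ - ρinf) (u p)‖ ^ 2) := by
  obtain ⟨φ, hφ_meas, hφ_le, hφ_int⟩ :=
    exists_measurable_norm_le_one_integral_mul_eq_integral_abs hn.aemeasurable
  obtain ⟨M, hM, htrace⟩ := hdual φ hφ_meas hφ_le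
  let b : HilbertBasis ℕ ℂ (Lp ℂ 2 μ) := HilbertBasis.mk hu hucomplete.ge
  have hb : ⇑b = u := HilbertBasis.coe_mk _ _
  obtain ⟨hsum, hle⟩ := summable_and_tsum_le_sqrt_tsum_inv_mul_sqrt_tsum_mul_sq
    (fun p => one_pos.trans_le (hlam p)) (fun p => norm_nonneg ((ρ - ρinf) (u p))) hlamsum hHS
  calc (∫ x, |n x - ninf x| ∂μ)
      = ‖∑' p, (inner ℂ (u p) ((ρ - ρinf) (M (u p))) : ℂ)‖ := by
        rw [← htrace, hφ_int, Complex.norm_real, Real.norm_of_nonneg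
          (integral_nonneg fun _ => abs_nonneg _)]
    _ ≤ ‖M‖ * ∑' p, ‖(ρ - ρinf) (u p)‖ := by
        simpa only [hb] using b.norm_tsum_inner_apply_comp_le M (ρ - ρinf) (hb ▸ hsum)
    _ ≤ ∑' p, ‖(ρ - ρinf) (u p)‖ :=
        mul_le_of_le_one_left (tsum_nonneg fun _ => norm_nonneg _)
          (Lp.opNorm_le_one_of_ae_eq_mul M hφ_le hM)
    _ ≤ _ := hle

/-- L¹ control of the difference of densities by a weighted Hilbert–Schmidt norm:
    for trace-class ρ, ρ_∞ on L²((0,1)) with densities n, n_∞ (characterized by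
    duality: ∫ (n−n_∞)φ = Tr((ρ−ρ_∞)M_φ) for every bounded multiplier φ), and
    R = 1 + |H+A_∞| diagonal in the complete orthonormal eigenbasis (u_p) with
    eigenvalues λ_p ≥ 1 satisfying Σ λ_p^{-1} < ∞, one has
    ‖n − n_∞‖_{L¹} ≤ C ‖(ρ−ρ_∞) R^{1/2}‖_{J₂}, where
    ‖(ρ−ρ_∞)R^{1/2}‖²_{J₂} = Σ_p λ_p ‖(ρ−ρ_∞) u_p‖² and C = (Σ_p λ_p^{-1})^{1/2}. -/
theorem stmt11
    (μ : Measure ℝ) (hμ : μ = MeasureTheory.volume.restrict (Set.Ioo 0 1))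
    (ρ ρinf : Lp ℂ 2 μ →L[ℂ] Lp ℂ 2 μ)
    (n ninf : ℝ → ℝ)
    (hn : Integrable (fun x => n x - ninf x) μ)
    (u : ℕ → Lp ℂ 2 μ) (lam : ℕ → ℝ)
    (hu : Orthonormal ℂ u)
    (hucomplete : (Submodule.span ℂ (Set.range u)).topologicalClosure = ⊤)
    (hlam : ∀ p, 1 ≤ lam p)
    (hlamsum : Summable (fun p => (lam p)⁻¹))
    (hHS : Summable (fun p => lam p * ‖(ρ - ρinf) (u p)‖ ^ 2))
    -- duality characterization of the densities: for every bounded measurable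
    -- multiplier φ there is a multiplication operator M_φ with
    -- ∫ (n−n_∞)φ = Tr((ρ−ρ_∞) M_φ) (trace computed in the basis (u_p)):
    (hdual : ∀ φ : ℝ → ℂ, Measurable φ → (∀ x, ‖φ x‖ ≤ 1) →
      ∃ Mφ : Lp ℂ 2 μ →L[ℂ] Lp ℂ 2 μ,
        (∀ f : Lp ℂ 2 μ, (Mφ f : ℝ → ℂ) =ᵐ[μ] fun x => φ x * (f : ℝ → ℂ) x) ∧
        (∫ x, ((n x - ninf x : ℝ) : ℂ) * φ x ∂μ) =
          ∑' p, (inner ℂ (u p) ((ρ - ρinf) (Mφ (u p))) : ℂ)) :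
    (∫ x, |n x - ninf x| ∂μ) ≤
      Real.sqrt (∑' p, (lam p)⁻¹) *
        Real.sqrt (∑' p, lam p * ‖(ρ - ρinf) (u p)‖ ^ 2) :=
  stmt11_general μ ρ ρinf n ninf hn u lam hu hucomplete hlam hlamsum hHS hdual
end

section
/- Let (n_k)_{k≥0} be functions on [0,1] and (A_k, V_k) satisfy the discrete relation (n_{k+1} − n_k)/Δt + ∇·(n_k ∇(A_{k+1} − V_{k+1})) = 0 in the weak sense. Suppose sup_k ‖n_k‖_{L^∞} ≤ M and Δt Σ_{j≥0} ‖√(n_j) ∇(A_{j+1}−V_{j+1})‖²_{L²} ≤ E. Then for any integers k₁ < k₂ and any φ ∈ H¹_per, |∫(n_{k₂} − n_{k₁})φ dx| ≤ √M √E √((k₂−k₁)Δt) ‖∇φ‖_{L²}; hence ‖n_{k₂} − n_{k₁}‖_{H⁻¹_per} ≤ √(ME) √((k₂−k₁)Δt). -/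
/-!
Testing the scheme against `φ` shows that each time step changes `∫ n φ` by
`Δt ∫ n_p w'_{p+1} φ'`, so `∫ (n_{k₂} - n_{k₁}) φ` telescopes into `Δt` times a sum of
`k₂ - k₁` such fluxes. Cauchy–Schwarz with weight `n_p ≤ M` bounds the square of each flux by
`M ‖φ'‖²` times the dissipation `∫ n_p (w'_{p+1})²`. Cauchy–Schwarz over the time steps then
costs a factor `k₂ - k₁`, while the dissipations sum to at most `E / Δt`.
-/

open MeasureTheory intervalIntegral Finset

theorem sq_intervalIntegral_mul_le_of_weight {a b : ℝ} (hab : a ≤ b) {ρ f g : ℝ → ℝ}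
    (hρ : Continuous ρ) (hf : Continuous f) (hg : Continuous g) (hρ₀ : ∀ x, 0 ≤ ρ x) :
    (∫ x in a..b, ρ x * f x * g x) ^ 2 ≤
      (∫ x in a..b, ρ x * f x ^ 2) * ∫ x in a..b, ρ x * g x ^ 2 := by
  have hint : ∀ {h : ℝ → ℝ}, Continuous h → IntervalIntegrable h volume a b :=
    fun hc => hc.intervalIntegrable a b
  have hquad : ∀ t : ℝ, 0 ≤ (∫ x in a..b, ρ x * g x ^ 2) * (t * t) +
      2 * (∫ x in a..b, ρ x * f x * g x) * t + ∫ x in a..b, ρ x * f x ^ 2 := by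
    intro t
    have hexpand : ∀ x, ρ x * (f x + t * g x) ^ 2 =
        (t * t) * (ρ x * g x ^ 2) + (2 * t) * (ρ x * f x * g x) + ρ x * f x ^ 2 :=
      fun x => by ring
    have hnonneg : 0 ≤ ∫ x in a..b, ρ x * (f x + t * g x) ^ 2 :=
      integral_nonneg hab fun x _ => mul_nonneg (hρ₀ x) (sq_nonneg _)
    simp only [hexpand] at hnonneg
    rw [integral_add (hint (by fun_prop)) (hint (by fun_prop)),
      integral_add (hint (by fun_prop)) (hint (by fun_prop)),
      intervalIntegral.integral_const_mul, intervalIntegral.integral_const_mul] at hnonneg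
    linarith
  have := discrim_le_zero hquad
  rw [discrim] at this
  nlinarith

theorem intervalIntegral_mul_le_of_le {a b M : ℝ} (hab : a ≤ b) {ρ h : ℝ → ℝ}
    (hρ : Continuous ρ) (hh : Continuous h) (hh₀ : ∀ x, 0 ≤ h x) (hρM : ∀ x, ρ x ≤ M) :
    ∫ x in a..b, ρ x * h x ≤ M * ∫ x in a..b, h x := by
  rw [← intervalIntegral.integral_const_mul]
  exact integral_mono_on hab ((hρ.mul hh).intervalIntegrable a b)
    ((continuous_const.mul hh).intervalIntegrable a b)
    fun x _ => mul_le_mul_of_nonneg_right (hρM x) (hh₀ x)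

theorem sq_intervalIntegral_mul_le_of_weight_le {a b M : ℝ} (hab : a ≤ b) {ρ f g : ℝ → ℝ}
    (hρ : Continuous ρ) (hf : Continuous f) (hg : Continuous g) (hρ₀ : ∀ x, 0 ≤ ρ x)
    (hρM : ∀ x, ρ x ≤ M) :
    (∫ x in a..b, ρ x * f x * g x) ^ 2 ≤
      (∫ x in a..b, ρ x * f x ^ 2) * (M * ∫ x in a..b, g x ^ 2) :=
  (sq_intervalIntegral_mul_le_of_weight hab hρ hf hg hρ₀).trans <|
    mul_le_mul_of_nonneg_left
      (intervalIntegral_mul_le_of_le hab hρ (hg.pow 2) (fun x => sq_nonneg (g x)) hρM)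
      (integral_nonneg hab fun x _ => mul_nonneg (hρ₀ x) (sq_nonneg _))

theorem sq_mul_sum_le_of_sq_le_mul {ι : Type*} (s : Finset ι) {a b : ι → ℝ} {τ K E : ℝ}
    (hτ : 0 ≤ τ) (hK : 0 ≤ K) (hb : ∀ i ∈ s, b i ^ 2 ≤ a i * K)
    (ha : τ * ∑ i ∈ s, a i ≤ E) :
    (τ * ∑ i ∈ s, b i) ^ 2 ≤ K * E * (#s * τ) := by
  have hτsK : 0 ≤ τ * #s * K := by positivity
  calc (τ * ∑ i ∈ s, b i) ^ 2 = τ ^ 2 * (∑ i ∈ s, b i) ^ 2 := by ring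
    _ ≤ τ ^ 2 * (#s * ∑ i ∈ s, b i ^ 2) := by gcongr; exact sq_sum_le_card_mul_sum_sq
    _ ≤ τ ^ 2 * (#s * ∑ i ∈ s, a i * K) := by gcongr with i hi; exact hb i hi
    _ = τ * #s * K * (τ * ∑ i ∈ s, a i) := by rw [← sum_mul]; ring
    _ ≤ τ * #s * K * E := by gcongr
    _ = K * E * (#s * τ) := by ring

theorem intervalIntegral_sub_mul_eq_sum_Ico {a b : ℝ} {f : ℕ → ℝ → ℝ} {φ : ℝ → ℝ}
    (hf : ∀ k, IntervalIntegrable (fun x => f k x * φ x) volume a b) {k₁ k₂ : ℕ} (hk : k₁ ≤ k₂) :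
    ∫ x in a..b, (f k₂ x - f k₁ x) * φ x =
      ∑ p ∈ Ico k₁ k₂, ∫ x in a..b, (f (p + 1) x - f p x) * φ x := by
  have hsub : ∀ k m, ∫ x in a..b, (f k x - f m x) * φ x =
      (∫ x in a..b, f k x * φ x) - ∫ x in a..b, f m x * φ x := fun k m => by
    simp only [sub_mul]; exact integral_sub (hf k) (hf m)
  simp only [hsub]
  exact (sum_Ico_sub (fun k => ∫ x in a..b, f k x * φ x) hk).symm

theorem stmt13_general (n : ℕ → ℝ → ℝ) (dw : ℕ → ℝ → ℝ) (Δt M E : ℝ)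
    (hΔt : 0 < Δt) (hM : 0 ≤ M) (hE : 0 ≤ E)
    (hncont : ∀ k, Continuous (n k))
    (hnpos : ∀ k x, 0 ≤ n k x) (hnbound : ∀ k x, n k x ≤ M)
    (hdwcont : ∀ k, Continuous (dw k))
    -- weak form of the scheme:
    (hscheme : ∀ k : ℕ, ∀ φ dφ : ℝ → ℝ,
      (∀ x, HasDerivAt φ (dφ x) x) → Function.Periodic φ 1 → Continuous dφ →
      (∫ x in (0:ℝ)..1, (n (k+1) x - n k x) * φ x) / Δt =
        ∫ x in (0:ℝ)..1, n k x * dw (k+1) x * dφ x)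
    -- dissipation bound:
    (hdissip : Δt * (∑' j : ℕ, ∫ x in (0:ℝ)..1, n j x * (dw (j+1) x) ^ 2) ≤ E)
    (hdissum : Summable (fun j : ℕ => ∫ x in (0:ℝ)..1, n j x * (dw (j+1) x) ^ 2)) :
    ∀ k₁ k₂ : ℕ, k₁ < k₂ → ∀ φ dφ : ℝ → ℝ,
      (∀ x, HasDerivAt φ (dφ x) x) → Function.Periodic φ 1 → Continuous dφ →
      |∫ x in (0:ℝ)..1, (n k₂ x - n k₁ x) * φ x| ≤
        Real.sqrt M * Real.sqrt E * Real.sqrt ((k₂ - k₁ : ℝ) * Δt) *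
          Real.sqrt (∫ x in (0:ℝ)..1, (dφ x) ^ 2) := by
  intro k₁ k₂ hk φ dφ hφ hφper hdφ
  have hφc : Continuous φ := continuous_iff_continuousAt.2 fun x => (hφ x).continuousAt
  set C := ∫ x in (0:ℝ)..1, dφ x ^ 2
  have hC : 0 ≤ C := integral_nonneg zero_le_one fun x _ => sq_nonneg _
  have hincrement : ∫ x in (0:ℝ)..1, (n k₂ x - n k₁ x) * φ x =
      Δt * ∑ p ∈ Ico k₁ k₂, ∫ x in (0:ℝ)..1, n p x * dw (p + 1) x * dφ x := by
    rw [intervalIntegral_sub_mul_eq_sum_Ico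
      (fun k => ((hncont k).mul hφc).intervalIntegrable 0 1) hk.le, mul_sum]
    refine sum_congr rfl fun p _ => ?_
    rw [← hscheme p φ dφ hφ hφper hdφ, mul_div_cancel₀ _ hΔt.ne']
  have hflux : ∀ p ∈ Ico k₁ k₂, (∫ x in (0:ℝ)..1, n p x * dw (p + 1) x * dφ x) ^ 2 ≤
      (∫ x in (0:ℝ)..1, n p x * dw (p + 1) x ^ 2) * (M * C) := fun p _ =>
    sq_intervalIntegral_mul_le_of_weight_le zero_le_one (hncont p) (hdwcont _) hdφ (hnpos p)
      (hnbound p)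
  have hdissipIco : Δt * ∑ p ∈ Ico k₁ k₂, ∫ x in (0:ℝ)..1, n p x * dw (p + 1) x ^ 2 ≤ E :=
    (mul_le_mul_of_nonneg_left (hdissum.sum_le_tsum _ fun p _ =>
      integral_nonneg zero_le_one fun x _ => mul_nonneg (hnpos p x) (sq_nonneg _)) hΔt.le).trans
      hdissip
  have hsq := sq_mul_sum_le_of_sq_le_mul _ hΔt.le (mul_nonneg hM hC) hflux hdissipIco
  rw [Nat.card_Ico, Nat.cast_sub hk.le, ← hincrement] at hsq
  calc |∫ x in (0:ℝ)..1, (n k₂ x - n k₁ x) * φ x|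
      ≤ Real.sqrt (M * E * ((k₂ - k₁ : ℝ) * Δt) * C) := Real.abs_le_sqrt (by linarith)
    _ = _ := by
      rw [Real.sqrt_mul' _ hC, Real.sqrt_mul' _ (mul_nonneg (by simp [hk.le]) hΔt.le),
        Real.sqrt_mul' _ hE]

/-- Discrete equicontinuity in time for the semi-discrete QDD scheme: if
    (n_{k+1} − n_k)/Δt + ∇·(n_k ∇w_{k+1}) = 0 weakly (w_k = A_k − V_k, with
    spatial derivative dw_k), 0 ≤ n_k ≤ M, and the dissipation bound
    Δt Σ_j ∫ n_j (dw_{j+1})² ≤ E holds, then for all k₁ < k₂ and periodic C¹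
    test functions φ:
    |∫ (n_{k₂} − n_{k₁})φ| ≤ √M √E √((k₂−k₁)Δt) ‖φ'‖_{L²}. -/
theorem stmt13 (n : ℕ → ℝ → ℝ) (w dw : ℕ → ℝ → ℝ) (Δt M E : ℝ)
    (hΔt : 0 < Δt) (hM : 0 ≤ M) (hE : 0 ≤ E)
    (hncont : ∀ k, Continuous (n k))
    (hnper : ∀ k, Function.Periodic (n k) 1)
    (hnpos : ∀ k x, 0 ≤ n k x) (hnbound : ∀ k x, n k x ≤ M)
    (hw : ∀ k x, HasDerivAt (w k) (dw k x) x)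
    (hdwcont : ∀ k, Continuous (dw k))
    (hwper : ∀ k, Function.Periodic (w k) 1)
    -- weak form of the scheme:
    (hscheme : ∀ k : ℕ, ∀ φ dφ : ℝ → ℝ,
      (∀ x, HasDerivAt φ (dφ x) x) → Function.Periodic φ 1 → Continuous dφ →
      (∫ x in (0:ℝ)..1, (n (k+1) x - n k x) * φ x) / Δt =
        ∫ x in (0:ℝ)..1, n k x * dw (k+1) x * dφ x)
    -- dissipation bound:
    (hdissip : Δt * (∑' j : ℕ, ∫ x in (0:ℝ)..1, n j x * (dw (j+1) x) ^ 2) ≤ E)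
    (hdissum : Summable (fun j : ℕ => ∫ x in (0:ℝ)..1, n j x * (dw (j+1) x) ^ 2)) :
    ∀ k₁ k₂ : ℕ, k₁ < k₂ → ∀ φ dφ : ℝ → ℝ,
      (∀ x, HasDerivAt φ (dφ x) x) → Function.Periodic φ 1 → Continuous dφ →
      |∫ x in (0:ℝ)..1, (n k₂ x - n k₁ x) * φ x| ≤
        Real.sqrt M * Real.sqrt E * Real.sqrt ((k₂ - k₁ : ℝ) * Δt) *
          Real.sqrt (∫ x in (0:ℝ)..1, (dφ x) ^ 2) :=
  stmt13_general n dw Δt M E hΔt hM hE hncont hnpos hnbound hdwcont hscheme hdissip hdissum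
end

section
/- Let (ρ_p)_{p≥1} be a summable sequence in [0,M] with Σ_p p² ρ_p =: K < ∞, and let ε > 0. Then Σ_{p: ρ_p ≤ ε} |ρ_p log ρ_p − ρ_p| ≤ C_M ε^{1/4} (Σ_{p≥1} 1/p²)^{1/2} K^{1/2}, where C_M is the constant with |s log s − s| ≤ C_M s^{3/4} on [0,M]. -/
/-- Tail entropy estimate: if (ρ_p)_{p≥1} ⊂ [0,M] with Σ_{p≥1} p² ρ_p = K < ∞,
    and C_M satisfies |s log s − s| ≤ C_M s^{3/4} on [0,M], then for any ε > 0,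
    Σ_{p≥1, ρ_p ≤ ε} |ρ_p log ρ_p − ρ_p| ≤ C_M ε^{1/4} (Σ_{p≥1} 1/p²)^{1/2} K^{1/2}.
    (Sums over p ≥ 1 are written with index p+1, p ∈ ℕ.) -/
theorem stmt17 (M ε K CM : ℝ) (hM : 0 < M) (hε : 0 < ε)
    (ρ : ℕ → ℝ) (hρ : ∀ p : ℕ, ρ p ∈ Set.Icc (0:ℝ) M)
    (hCM : ∀ s ∈ Set.Icc (0:ℝ) M, |s * Real.log s - s| ≤ CM * s ^ ((3:ℝ)/4))
    (hKsum : Summable (fun p : ℕ => ((p+1 : ℝ)) ^ 2 * ρ (p+1)))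
    (hK : (∑' p : ℕ, ((p+1 : ℝ)) ^ 2 * ρ (p+1)) = K) :
    (∑' p : ℕ, Set.indicator {q : ℕ | ρ (q+1) ≤ ε}
        (fun q => |ρ (q+1) * Real.log (ρ (q+1)) - ρ (q+1)|) p) ≤
      CM * ε ^ ((1:ℝ)/4) * Real.sqrt (∑' p : ℕ, (1:ℝ) / ((p+1 : ℝ)) ^ 2) *
        Real.sqrt K := by
  have hρ0 : ∀ p, 0 ≤ ρ p := fun p => (hρ p).1
  have hCM0 : 0 ≤ CM := by
    have h1 := hCM M ⟨hM.le, le_refl M⟩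
    have h2 : (0:ℝ) < M ^ ((3:ℝ)/4) := Real.rpow_pos_of_pos hM _
    nlinarith [abs_nonneg (M * Real.log M - M)]
  have hc0 : 0 ≤ CM * ε ^ ((1:ℝ)/4) :=
    mul_nonneg hCM0 (Real.rpow_nonneg hε.le _)
  set f : ℕ → ℝ := fun p => Set.indicator {q : ℕ | ρ (q+1) ≤ ε}
      (fun q => |ρ (q+1) * Real.log (ρ (q+1)) - ρ (q+1)|) p with hf
  have key : ∀ p, f p ≤ CM * ε ^ ((1:ℝ)/4) * Real.sqrt (ρ (p+1)) := by
    intro p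
    by_cases h : p ∈ {q : ℕ | ρ (q+1) ≤ ε}
    · rw [hf]; simp only [Set.indicator_of_mem h]
      have hεp : ρ (p+1) ≤ ε := h
      refine (hCM _ (hρ (p+1))).trans ?_
      rcases eq_or_lt_of_le (hρ0 (p+1)) with h0 | h0
      · rw [← h0]
        rw [Real.zero_rpow (by norm_num), Real.sqrt_zero, mul_zero, mul_zero]
      · have hsplit : ρ (p+1) ^ ((3:ℝ)/4) = ρ (p+1) ^ ((1:ℝ)/4) * ρ (p+1) ^ ((1:ℝ)/2) := by
          rw [← Real.rpow_add h0]; norm_num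
        rw [hsplit, Real.sqrt_eq_rpow, mul_assoc]
        refine mul_le_mul_of_nonneg_left ?_ hCM0
        exact mul_le_mul_of_nonneg_right
          (Real.rpow_le_rpow (hρ0 _) hεp (by norm_num))
          (Real.rpow_nonneg (hρ0 _) _)
    · rw [hf]; simp only [Set.indicator_of_notMem h]
      positivity
  have hf0 : ∀ p, 0 ≤ f p := fun p =>
    Set.indicator_nonneg (fun q _ => abs_nonneg _) p
  have hsum1 : Summable (fun p : ℕ => (1:ℝ) / ((p+1 : ℝ)) ^ 2) := by
    have := (summable_nat_add_iff 1).2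
      (Real.summable_one_div_nat_pow.2 (by norm_num : 1 < 2))
    simpa using this
  have hsqrt : Summable (fun p : ℕ => Real.sqrt (ρ (p+1))) := by
    refine Summable.of_nonneg_of_le (fun p => Real.sqrt_nonneg _)
      (fun p => ?_) ((hsum1.add hKsum).div_const 2)
    have hp : (0:ℝ) < (p+1 : ℝ) := by positivity
    have hs2 : Real.sqrt (ρ (p+1)) ^ 2 = ρ (p+1) := Real.sq_sqrt (hρ0 _)
    have hsq := sq_nonneg (1/((p:ℝ)+1) - ((p:ℝ)+1) * Real.sqrt (ρ (p+1)))
    have hinv : (1/((p:ℝ)+1)) * (((p:ℝ)+1)) = 1 := by field_simp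
    have ha : (1/((p:ℝ)+1)) ^ 2 = 1 / ((p:ℝ)+1) ^ 2 := by rw [div_pow]; norm_num
    have hb : ((p:ℝ)+1) ^ 2 * ρ (p+1) = (((p:ℝ)+1) * Real.sqrt (ρ (p+1))) ^ 2 := by
      rw [mul_pow, hs2]
    nlinarith [Real.sqrt_nonneg (ρ (p+1))]
  have hfsum : Summable f :=
    Summable.of_nonneg_of_le hf0 key (hsqrt.mul_left _)
  refine Summable.tsum_le_of_sum_le hfsum (fun s => ?_)
  calc ∑ p ∈ s, f p
      ≤ ∑ p ∈ s, CM * ε ^ ((1:ℝ)/4) * Real.sqrt (ρ (p+1)) :=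
        Finset.sum_le_sum fun p _ => key p
    _ = CM * ε ^ ((1:ℝ)/4) * ∑ p ∈ s, (1/((p:ℝ)+1)) * (((p:ℝ)+1) * Real.sqrt (ρ (p+1))) := by
        rw [Finset.mul_sum]
        refine Finset.sum_congr rfl fun p _ => ?_
        have hp : ((p:ℝ)+1) ≠ 0 := by positivity
        field_simp
    _ ≤ CM * ε ^ ((1:ℝ)/4) *
        (Real.sqrt (∑ p ∈ s, (1/((p:ℝ)+1)) ^ 2) *
         Real.sqrt (∑ p ∈ s, (((p:ℝ)+1) * Real.sqrt (ρ (p+1))) ^ 2)) :=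
        mul_le_mul_of_nonneg_left (Real.sum_mul_le_sqrt_mul_sqrt s _ _) hc0
    _ ≤ CM * ε ^ ((1:ℝ)/4) *
        (Real.sqrt (∑' p : ℕ, (1:ℝ) / ((p+1 : ℝ)) ^ 2) * Real.sqrt K) := by
        refine mul_le_mul_of_nonneg_left (mul_le_mul ?_ ?_ (Real.sqrt_nonneg _)
          (Real.sqrt_nonneg _)) hc0
        · refine Real.sqrt_le_sqrt ?_
          have : ∀ p : ℕ, (1/((p:ℝ)+1)) ^ 2 = (1:ℝ) / ((p+1 : ℝ)) ^ 2 := by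
            intro p; rw [div_pow]; norm_num
          rw [Finset.sum_congr rfl fun p _ => this p]
          exact Summable.sum_le_tsum s (fun p _ => by positivity) hsum1
        · refine Real.sqrt_le_sqrt ?_
          rw [← hK]
          have : ∀ p : ℕ, (((p:ℝ)+1) * Real.sqrt (ρ (p+1))) ^ 2
              = ((p+1 : ℝ)) ^ 2 * ρ (p+1) := by
            intro p; rw [mul_pow, Real.sq_sqrt (hρ0 _)]
          rw [Finset.sum_congr rfl fun p _ => this p]
          exact Summable.sum_le_tsum s (fun p _ => mul_nonneg (by positivity) (hρ0 _)) hKsum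
    _ = CM * ε ^ ((1:ℝ)/4) * Real.sqrt (∑' p : ℕ, (1:ℝ) / ((p+1 : ℝ)) ^ 2) *
        Real.sqrt K := by ring
end
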